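/- Let s ∈ (0,1), p > 1 with sp = 1 and Φ(t) = e^t − Σ_{k=0}^{⌈p-2⌉} t^k/k!. There exists α_* > 0 such that for all α ∈ [0, α_*), sup over u ∈ W^{s,p}(ℝ) with ‖u‖_{W^{s,p}(ℝ)} ≤ 1 of ∫_ℝ Φ(α|u|^{1/(1-s)}) dx is finite. -/

import Mathlib

open MeasureTheory Real ENNReal Filter Topology Set

/-- `[u]^p`: the Gagliardo seminorm to the power `p`, with kernel `|x-y|^{-2}` (case `sp = 1`). -/
noncomputable def gagP (p : ℝ) (u : ℝ → ℝ) : ℝ≥0∞ :=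
  ∫⁻ x : ℝ, ∫⁻ y : ℝ, ENNReal.ofReal (|u x - u y| ^ p / |x - y| ^ 2)

/-- The Gagliardo seminorm `[u]`. -/
noncomputable def gagSemi (p : ℝ) (u : ℝ → ℝ) : ℝ≥0∞ := (gagP p u) ^ (1 / p)

/-- The full `W^{s,p}(ℝ)` norm `(‖u‖_{L^p}^p + [u]^p)^{1/p}`. -/
noncomputable def sobNorm (p : ℝ) (u : ℝ → ℝ) : ℝ≥0∞ :=
  ((∫⁻ x : ℝ, ENNReal.ofReal (|u x| ^ p)) + gagP p u) ^ (1 / p)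

/-- Membership in `W^{s,p}(ℝ)` (with `sp = 1`): `u ∈ L^p` and finite Gagliardo seminorm. -/
def InW (p : ℝ) (u : ℝ → ℝ) : Prop :=
  MemLp u (ENNReal.ofReal p) volume ∧ gagP p u < ⊤

/-- Membership in `W̃^{s,p}_0(I)`: `u` is approximated in the `W^{s,p}(ℝ)` norm by
smooth functions compactly supported in `I`. -/
def InTildeW0 (p : ℝ) (I : Set ℝ) (u : ℝ → ℝ) : Prop :=
  ∀ ε : ℝ, 0 < ε → ∃ φ : ℝ → ℝ, ContDiff ℝ (⊤ : ℕ∞) φ ∧ HasCompactSupport φ ∧ tsupport φ ⊆ I ∧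
    sobNorm p (fun x => u x - φ x) < ENNReal.ofReal ε

/-- The Moser family `u_ε`. -/
noncomputable def moser (s ε : ℝ) (x : ℝ) : ℝ :=
  if |x| ≤ ε then |Real.log ε| ^ (1 - s)
  else if |x| < 1 then (abs (Real.log (abs x))) / |Real.log ε| ^ s
  else 0

/-- The constant `γ_s = 8 Γ(p+1) Σ_{k≥0} (1+2k)^{-p}`. -/
noncomputable def gammaS (p : ℝ) : ℝ :=
  8 * Real.Gamma (p + 1) * ∑' k : ℕ, 1 / (1 + 2 * (k : ℝ)) ^ p

/-- `Φ(t) = e^t - Σ_{k=0}^{⌈p-2⌉} t^k/k!`. -/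
noncomputable def Phi (p t : ℝ) : ℝ :=
  Real.exp t - ∑ k ∈ Finset.range (⌈p - 2⌉₊ + 1), t ^ k / (k.factorial : ℝ)


lemma rpow_add_rpow_le' {p a b : ℝ} (hp : 1 ≤ p) (ha : 0 ≤ a) (hb : 0 ≤ b) :
    a ^ p + b ^ p ≤ (a + b) ^ p := by
  have hp0 : p ≠ 0 := by positivity
  rcases eq_or_lt_of_le (add_nonneg ha hb) with h | h
  · have ha0 : a = 0 := by linarith
    have hb0 : b = 0 := by linarith
    simp [ha0, hb0, Real.zero_rpow hp0]
  · have key : ∀ x : ℝ, 0 ≤ x → x ≤ a + b → x ^ p ≤ (a+b) ^ p * (x / (a+b)) := by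
      intro x hx hxc
      rcases eq_or_lt_of_le hx with h0 | h0
      · rw [← h0, Real.zero_rpow hp0]; positivity
      · have h1 : x / (a+b) ≤ 1 := by rw [div_le_one h]; linarith
        have : x ^ p = (a+b) ^ p * (x/(a+b)) ^ p := by
          rw [← Real.mul_rpow h.le (by positivity)]
          rw [mul_div_cancel₀ _ h.ne']
        rw [this]
        gcongr
        calc (x/(a+b)) ^ p ≤ (x/(a+b)) ^ (1:ℝ) :=
              Real.rpow_le_rpow_of_exponent_ge (by positivity) h1 hp
          _ = x / (a+b) := Real.rpow_one _
    have h1 := key a ha (by linarith)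
    have h2 := key b hb (by linarith)
    have : a ^ p + b ^ p ≤ (a+b)^p * (a/(a+b)) + (a+b)^p * (b/(a+b)) := by linarith
    calc a ^ p + b ^ p ≤ (a+b)^p * (a/(a+b) + b/(a+b)) := by rw [mul_add]; exact this
      _ = (a+b)^p := by rw [← add_div, div_self h.ne', mul_one]

lemma sum_rpow_le_rpow_sum {ι : Type*} {s : Finset ι} {f : ι → ℝ} {p : ℝ} (hp : 1 ≤ p)
    (hf : ∀ i ∈ s, 0 ≤ f i) :
    ∑ i ∈ s, f i ^ p ≤ (∑ i ∈ s, f i) ^ p := by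
  induction s using Finset.cons_induction with
  | empty => simp [Real.zero_rpow (by positivity : p ≠ 0)]
  | cons a s ha ih =>
    rw [Finset.sum_cons, Finset.sum_cons]
    have hfs : ∀ i ∈ s, 0 ≤ f i := fun i hi => hf i (Finset.mem_cons_of_mem hi)
    calc f a ^ p + ∑ i ∈ s, f i ^ p ≤ f a ^ p + (∑ i ∈ s, f i) ^ p := by
          have := ih hfs; linarith
      _ ≤ (f a + ∑ i ∈ s, f i) ^ p :=
          rpow_add_rpow_le' hp (hf a (Finset.mem_cons_self a s)) (Finset.sum_nonneg hfs)

lemma sum_le_card_rpow {n : ℕ} {c : ℕ → ℝ} (hc : ∀ k, 0 ≤ c k) {p : ℝ} (hp : 1 < p) :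
    ∑ k ∈ Finset.range n, c k
      ≤ (n : ℝ) ^ (1 - 1/p) * (∑ k ∈ Finset.range n, c k ^ p) ^ (1/p) := by
  rcases Nat.eq_zero_or_pos n with rfl | hn
  · simp; positivity
  have hn0 : (0:ℝ) < n := by exact_mod_cast hn
  have hw : ∀ i ∈ Finset.range n, (0:ℝ) ≤ (n:ℝ)⁻¹ := fun _ _ => by positivity
  have hw' : ∑ _i ∈ Finset.range n, (n:ℝ)⁻¹ = 1 := by
    simp [Finset.sum_const, Finset.card_range]
    field_simp
  have h := Real.arith_mean_le_rpow_mean (Finset.range n) (fun _ => (n:ℝ)⁻¹) c hw hw'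
    (fun i _ => hc i) hp.le
  have hL : ∑ i ∈ Finset.range n, (n:ℝ)⁻¹ * c i = (n:ℝ)⁻¹ * ∑ i ∈ Finset.range n, c i := by
    rw [Finset.mul_sum]
  have hR : ∑ i ∈ Finset.range n, (n:ℝ)⁻¹ * c i ^ p
      = (n:ℝ)⁻¹ * ∑ i ∈ Finset.range n, c i ^ p := by rw [Finset.mul_sum]
  rw [hL, hR] at h
  have hrw : ((n:ℝ)⁻¹ * ∑ i ∈ Finset.range n, c i ^ p) ^ (1/p)
      = ((n:ℝ)⁻¹) ^ (1/p) * (∑ i ∈ Finset.range n, c i ^ p) ^ (1/p) := by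
    refine Real.mul_rpow (by positivity) (Finset.sum_nonneg fun i _ => Real.rpow_nonneg (hc i) p)
  rw [hrw] at h
  have : ∑ i ∈ Finset.range n, c i ≤ (n:ℝ) * ((n:ℝ)⁻¹) ^ (1/p)
      * (∑ i ∈ Finset.range n, c i ^ p) ^ (1/p) := by
    have := mul_le_mul_of_nonneg_left h (le_of_lt hn0)
    rw [← mul_assoc, mul_inv_cancel₀ hn0.ne', one_mul] at this
    linarith [this]
  refine this.trans (le_of_eq ?_)
  congr 1
  have h1 : ((n:ℝ)⁻¹) ^ (1/p) = (n:ℝ) ^ (-(1/p)) := by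
    rw [Real.inv_rpow hn0.le, ← Real.rpow_neg hn0.le]
  rw [h1]
  have h2 := Real.rpow_add hn0 1 (-(1/p))
  rw [Real.rpow_one] at h2
  rw [← h2]
  ring_nf


lemma exp_tsum (t : ℝ) : Real.exp t = ∑' n : ℕ, t ^ n / (n.factorial : ℝ) := by
  rw [Real.exp_eq_exp_ℝ, NormedSpace.exp_eq_tsum_div]

lemma Phi_nonneg (p : ℝ) {t : ℝ} (ht : 0 ≤ t) : 0 ≤ Phi p t := by
  have := Real.sum_le_exp_of_nonneg ht (⌈p - 2⌉₊ + 1)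
  unfold Phi; linarith

lemma Phi_le_exp (p : ℝ) {t : ℝ} (ht : 0 ≤ t) : Phi p t ≤ Real.exp t := by
  have h : 0 ≤ ∑ k ∈ Finset.range (⌈p - 2⌉₊ + 1), t ^ k / (k.factorial : ℝ) :=
    Finset.sum_nonneg fun k _ => by positivity
  unfold Phi; linarith

lemma Phi_le_pow_mul_exp (p : ℝ) {t : ℝ} (ht : 0 ≤ t) :
    Phi p t ≤ t ^ (⌈p - 2⌉₊ + 1) * Real.exp t := by
  set K := ⌈p - 2⌉₊ + 1 with hK
  have hsum : Summable (fun n : ℕ => t ^ n / (n.factorial : ℝ)) :=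
    Real.summable_pow_div_factorial t
  have hsplit := Summable.sum_add_tsum_nat_add (f := fun n : ℕ => t ^ n / (n.factorial : ℝ)) K hsum
  have hPhi : Phi p t = ∑' i : ℕ, t ^ (i + K) / (((i + K).factorial : ℕ) : ℝ) := by
    unfold Phi
    rw [exp_tsum, ← hsplit]
    ring
  rw [hPhi]
  have hsum2 : Summable (fun i : ℕ => t ^ (i + K) / (((i + K).factorial : ℕ) : ℝ)) :=
    (summable_nat_add_iff K).mpr hsum
  have hterm : ∀ i : ℕ, t ^ (i + K) / (((i + K).factorial : ℕ) : ℝ)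
      ≤ t ^ K * (t ^ i / (i.factorial : ℝ)) := by
    intro i
    have h1 : (i.factorial : ℝ) ≤ ((i + K).factorial : ℝ) := by
      exact_mod_cast Nat.factorial_le (Nat.le_add_right i K)
    have h2 : (0:ℝ) < i.factorial := by exact_mod_cast i.factorial_pos
    calc t ^ (i + K) / (((i + K).factorial : ℕ) : ℝ) ≤ t ^ (i + K) / (i.factorial : ℝ) := by
          apply div_le_div_of_nonneg_left (by positivity) h2 h1
      _ = t ^ K * (t ^ i / (i.factorial : ℝ)) := by rw [pow_add]; ring
  calc (∑' i : ℕ, t ^ (i + K) / (((i + K).factorial : ℕ) : ℝ))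
      ≤ ∑' i : ℕ, t ^ K * (t ^ i / (i.factorial : ℝ)) :=
        Summable.tsum_le_tsum hterm hsum2 (hsum.mul_left _)
    _ = t ^ K * Real.exp t := by rw [tsum_mul_left, ← exp_tsum]

lemma add_rpow_le_two_rpow {a b q : ℝ} (hq : 1 ≤ q) (ha : 0 ≤ a) (hb : 0 ≤ b) :
    (a + b) ^ q ≤ (2:ℝ) ^ q * a ^ q + (2:ℝ) ^ q * b ^ q := by
  have hmax : 0 ≤ max a b := le_max_of_le_left ha
  have h1 : a + b ≤ 2 * max a b := by
    rcases le_total a b with h | h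
    · rw [max_eq_right h]; linarith
    · rw [max_eq_left h]; linarith
  have h2 : (max a b) ^ q ≤ a ^ q + b ^ q := by
    rcases le_total a b with h | h
    · rw [max_eq_right h]
      have : 0 ≤ a ^ q := Real.rpow_nonneg ha q
      linarith
    · rw [max_eq_left h]
      have : 0 ≤ b ^ q := Real.rpow_nonneg hb q
      linarith
  calc (a + b) ^ q ≤ (2 * max a b) ^ q :=
        Real.rpow_le_rpow (by linarith) h1 (by linarith)
    _ = 2 ^ q * (max a b) ^ q := Real.mul_rpow (by norm_num) hmax
    _ ≤ 2 ^ q * (a ^ q + b ^ q) := by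
        have h2q : (0:ℝ) ≤ 2 ^ q := Real.rpow_nonneg (by norm_num) q
        exact mul_le_mul_of_nonneg_left h2 h2q
    _ = 2 ^ q * a ^ q + 2 ^ q * b ^ q := by ring

lemma lint_Ici_inv_sq (m : ℝ) (hm : 0 < m) :
    ∫⁻ z in Ici m, ENNReal.ofReal ((z ^ 2)⁻¹) = ENNReal.ofReal (1 / m) := by
  rw [← Measure.restrict_congr_set Ioi_ae_eq_Ici]
  have hcong : ∫⁻ z in Ioi m, ENNReal.ofReal ((z ^ 2)⁻¹)
      = ∫⁻ z in Ioi m, ENNReal.ofReal (z ^ (-2:ℝ)) := by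
    apply setLIntegral_congr_fun measurableSet_Ioi
    intro z hz
    dsimp only
    congr 1
    have hz0 : (0:ℝ) < z := hm.trans hz
    rw [Real.rpow_neg hz0.le, ← Real.rpow_natCast z 2]
    norm_num
  rw [hcong]
  have hint : IntegrableOn (fun z : ℝ => z ^ (-2:ℝ)) (Ioi m) :=
    integrableOn_Ioi_rpow_of_lt (by norm_num) hm
  rw [← ofReal_integral_eq_lintegral_ofReal hint ?_]
  · congr 1
    rw [integral_Ioi_rpow_of_lt (by norm_num) hm]
    rw [show (-2:ℝ) + 1 = -1 by norm_num, Real.rpow_neg_one]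
    field_simp
  · filter_upwards [self_mem_ae_restrict measurableSet_Ioi] with z hz
    exact Real.rpow_nonneg (hm.trans hz).le _

noncomputable def Gm (m : ℝ) : ℝ → ℝ≥0∞ :=
  (Ici m).indicator (fun z => ENNReal.ofReal ((z ^ 2)⁻¹))

lemma Gm_meas (m : ℝ) : Measurable (Gm m) :=
  (Measurable.ennreal_ofReal ((measurable_id.pow_const 2).inv)).indicator measurableSet_Ici

lemma lint_right (m x : ℝ) (hm : 0 < m) :
    ∫⁻ y in Ici (x + m), ENNReal.ofReal (((x - y) ^ 2)⁻¹) = ENNReal.ofReal (1 / m) := by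
  have h1 : ∀ y : ℝ, (Ici (x + m)).indicator
      (fun y => ENNReal.ofReal (((x - y) ^ 2)⁻¹)) y = Gm m (y - x) := by
    intro y
    unfold Gm
    by_cases hy : y ∈ Ici (x + m)
    · rw [indicator_of_mem hy, indicator_of_mem (by simpa [mem_Ici] using by linarith [mem_Ici.mp hy] : y - x ∈ Ici m)]
      congr 2
      ring
    · rw [indicator_of_notMem hy, indicator_of_notMem]
      simp only [mem_Ici] at hy ⊢
      intro h; exact hy (by linarith)
  rw [← lintegral_indicator measurableSet_Ici]
  calc (∫⁻ y, (Ici (x + m)).indicator (fun y => ENNReal.ofReal (((x - y) ^ 2)⁻¹)) y)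
      = ∫⁻ y, Gm m (y - x) := by simp_rw [h1]
    _ = ∫⁻ z, Gm m z := lintegral_sub_right_eq_self (Gm m) x
    _ = ENNReal.ofReal (1 / m) :=
        (lintegral_indicator measurableSet_Ici _).trans (lint_Ici_inv_sq m hm)

lemma lint_left (m x : ℝ) (hm : 0 < m) :
    ∫⁻ y in Iic (x - m), ENNReal.ofReal (((x - y) ^ 2)⁻¹) = ENNReal.ofReal (1 / m) := by
  have h1 : ∀ y : ℝ, (Iic (x - m)).indicator
      (fun y => ENNReal.ofReal (((x - y) ^ 2)⁻¹)) y = Gm m (x - y) := by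
    intro y
    unfold Gm
    by_cases hy : y ∈ Iic (x - m)
    · rw [indicator_of_mem hy, indicator_of_mem]
      simp only [mem_Iic] at hy
      simp only [mem_Ici]; linarith
    · rw [indicator_of_notMem hy, indicator_of_notMem]
      simp only [mem_Iic] at hy
      simp only [mem_Ici]
      intro h; exact hy (by linarith)
  rw [← lintegral_indicator measurableSet_Iic]
  calc (∫⁻ y, (Iic (x - m)).indicator (fun y => ENNReal.ofReal (((x - y) ^ 2)⁻¹)) y)
      = ∫⁻ y, Gm m (x - y) := by simp_rw [h1]
    _ = ∫⁻ z, Gm m z :=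
        (Measure.measurePreserving_sub_left volume x).lintegral_comp (Gm_meas m)
    _ = ENNReal.ofReal (1 / m) :=
        (lintegral_indicator measurableSet_Ici _).trans (lint_Ici_inv_sq m hm)

lemma kernel_lb {E : Set ℝ} (hE : MeasurableSet E) {m : ℝ} (hm : 0 < m)
    (hvol : volume E ≤ ENNReal.ofReal m) (x : ℝ) :
    ENNReal.ofReal (1 / m) ≤ ∫⁻ y in Eᶜ, ENNReal.ofReal (((x - y) ^ 2)⁻¹) := by
  set κ : ℝ → ℝ≥0∞ := fun y => ENNReal.ofReal (((x - y) ^ 2)⁻¹) with hκ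
  set F : Set ℝ := Iic (x - m) ∪ Ici (x + m) with hF
  have hFmeas : MeasurableSet F := measurableSet_Iic.union measurableSet_Ici
  have hdisj : Disjoint (Iic (x - m)) (Ici (x + m)) := by
    rw [Set.disjoint_left]
    intro a ha ha'
    simp only [mem_Iic] at ha
    simp only [mem_Ici] at ha'
    linarith
  have hFval : ∫⁻ y in F, κ y = ENNReal.ofReal (1 / m) + ENNReal.ofReal (1 / m) := by
    rw [hF, lintegral_union measurableSet_Ici hdisj, lint_left m x hm, lint_right m x hm]
  have hsplit : ∫⁻ y in F, κ y = (∫⁻ y in F ∩ E, κ y) + ∫⁻ y in F \ E, κ y := by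
    rw [← lintegral_union (hFmeas.diff hE) (disjoint_sdiff_self_right.mono_left inter_subset_right)]
    rw [Set.inter_union_diff]
  have hbound : ∀ y ∈ F, κ y ≤ ENNReal.ofReal ((m ^ 2)⁻¹) := by
    intro y hy
    apply ENNReal.ofReal_le_ofReal
    have habs : m ≤ |x - y| := by
      rcases hy with hy | hy
      · simp only [mem_Iic] at hy
        calc m ≤ x - y := by linarith
          _ ≤ |x - y| := le_abs_self _
      · simp only [mem_Ici] at hy
        calc m ≤ y - x := by linarith
          _ ≤ |x - y| := by rw [abs_sub_comm]; exact le_abs_self _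
    have hsq : m ^ 2 ≤ (x - y) ^ 2 := by
      rw [← sq_abs (x - y)]
      exact pow_le_pow_left₀ hm.le habs 2
    exact inv_anti₀ (by positivity) hsq
  have hIE : ∫⁻ y in F ∩ E, κ y ≤ ENNReal.ofReal (1 / m) := by
    calc ∫⁻ y in F ∩ E, κ y ≤ ∫⁻ _y in F ∩ E, ENNReal.ofReal ((m ^ 2)⁻¹) :=
          setLIntegral_mono measurable_const (fun y hy => hbound y hy.1)
      _ = ENNReal.ofReal ((m ^ 2)⁻¹) * volume (F ∩ E) := by
          rw [setLIntegral_const]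
      _ ≤ ENNReal.ofReal ((m ^ 2)⁻¹) * ENNReal.ofReal m := by
          gcongr
          exact le_trans (measure_mono inter_subset_right) hvol
      _ = ENNReal.ofReal ((m ^ 2)⁻¹ * m) := by
          rw [← ENNReal.ofReal_mul (by positivity)]
      _ = ENNReal.ofReal (1 / m) := by
          congr 1
          field_simp
  have hFE : ∫⁻ y in F \ E, κ y ≤ ∫⁻ y in Eᶜ, κ y :=
    lintegral_mono_set (fun y hy => hy.2)
  have : ENNReal.ofReal (1 / m) + ENNReal.ofReal (1 / m)
      ≤ ENNReal.ofReal (1 / m) + ∫⁻ y in Eᶜ, κ y := by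
    rw [← hFval, hsplit]
    exact add_le_add hIE hFE
  exact (ENNReal.add_le_add_iff_left ENNReal.ofReal_ne_top).mp this

noncomputable def muf (g : ℝ → ℝ) (l : ℝ) : ℝ≥0∞ := volume {x | l < |g x|}

def Sk (g : ℝ → ℝ) (k : ℕ) : Set ℝ :=
  {l : ℝ | 0 ≤ l ∧ muf g l ≤ ENNReal.ofReal ((2:ℝ)⁻¹ ^ k)}

noncomputable def lamf (g : ℝ → ℝ) (k : ℕ) : ℝ := sInf (Sk g k)

section basic

variable {p : ℝ} {g : ℝ → ℝ}

lemma muf_anti {l l' : ℝ} (h : l ≤ l') : muf g l' ≤ muf g l :=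
  measure_mono (fun x hx => lt_of_le_of_lt h hx)

lemma cheb (hg : Measurable g) (hL : ∫⁻ x : ℝ, ENNReal.ofReal (|g x| ^ p) ≤ 1)
    (hp : 1 < p) {l : ℝ} (hl : 0 < l) :
    muf g l ≤ ENNReal.ofReal ((l ^ p)⁻¹) := by
  have hmeas : AEMeasurable (fun x => ENNReal.ofReal (|g x| ^ p)) volume :=
    by fun_prop
  have h := mul_meas_ge_le_lintegral₀ hmeas (ENNReal.ofReal (l ^ p))
  have hsub : {x : ℝ | l < |g x|} ⊆ {x | ENNReal.ofReal (l ^ p) ≤ ENNReal.ofReal (|g x| ^ p)} := by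
    intro x hx
    exact ENNReal.ofReal_le_ofReal
      (Real.rpow_le_rpow hl.le (le_of_lt hx) (by linarith))
  have h2 : ENNReal.ofReal (l ^ p) * muf g l ≤ 1 := by
    refine le_trans ?_ (h.trans hL)
    exact mul_le_mul_right (measure_mono hsub) _
  have hlp : (0:ℝ) < l ^ p := Real.rpow_pos_of_pos hl p
  rw [ENNReal.ofReal_inv_of_pos hlp]
  rw [ENNReal.le_inv_iff_mul_le]
  rwa [mul_comm] at h2

lemma Sk_nonempty (hg : Measurable g) (hL : ∫⁻ x : ℝ, ENNReal.ofReal (|g x| ^ p) ≤ 1)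
    (hp : 1 < p) (k : ℕ) : (Sk g k).Nonempty := by
  refine ⟨(2:ℝ) ^ ((k:ℝ)/p), ?_, ?_⟩
  · positivity
  · have h2 : ((2:ℝ) ^ ((k:ℝ)/p)) ^ p = (2:ℝ) ^ (k:ℕ) := by
      rw [← Real.rpow_mul (by norm_num : (0:ℝ) ≤ 2)]
      rw [div_mul_cancel₀ _ (by positivity : p ≠ 0)]
      exact Real.rpow_natCast 2 k
    have := cheb hg hL hp (l := (2:ℝ) ^ ((k:ℝ)/p)) (by positivity)
    rw [h2] at this
    refine this.trans (le_of_eq ?_)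
    congr 1
    rw [inv_pow]

lemma Sk_bddBelow (g : ℝ → ℝ) (k : ℕ) : BddBelow (Sk g k) :=
  ⟨0, fun _ h => h.1⟩

lemma lamf_nonneg (hg : Measurable g) (hL : ∫⁻ x : ℝ, ENNReal.ofReal (|g x| ^ p) ≤ 1)
    (hp : 1 < p) (k : ℕ) : 0 ≤ lamf g k :=
  le_csInf (Sk_nonempty hg hL hp k) (fun _ h => h.1)

lemma lamf_mono (hg : Measurable g) (hL : ∫⁻ x : ℝ, ENNReal.ofReal (|g x| ^ p) ≤ 1)
    (hp : 1 < p) {k k' : ℕ} (h : k ≤ k') : lamf g k ≤ lamf g k' := by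
  apply csInf_le_csInf (Sk_bddBelow g k) (Sk_nonempty hg hL hp k')
  intro l hl
  exact ⟨hl.1, hl.2.trans (ENNReal.ofReal_le_ofReal
    (pow_le_pow_of_le_one (by norm_num) (by norm_num) h))⟩

lemma muf_le_of_lt (hg : Measurable g) (hL : ∫⁻ x : ℝ, ENNReal.ofReal (|g x| ^ p) ≤ 1)
    (hp : 1 < p) {k : ℕ} {l : ℝ} (h : lamf g k < l) :
    muf g l ≤ ENNReal.ofReal ((2:ℝ)⁻¹ ^ k) := by
  obtain ⟨l', hl', hl'2⟩ := exists_lt_of_csInf_lt (Sk_nonempty hg hL hp k) h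
  exact (muf_anti hl'2.le).trans hl'.2

lemma lt_muf_of_lt (hg : Measurable g) (hL : ∫⁻ x : ℝ, ENNReal.ofReal (|g x| ^ p) ≤ 1)
    (hp : 1 < p) {k : ℕ} {l : ℝ} (h0 : 0 ≤ l) (h : l < lamf g k) :
    ¬ (muf g l ≤ ENNReal.ofReal ((2:ℝ)⁻¹ ^ k)) := by
  intro hcon
  exact absurd (csInf_le (Sk_bddBelow g k) ⟨h0, hcon⟩) (not_le.mpr h)

lemma lamf_zero_le_one (hg : Measurable g) (hL : ∫⁻ x : ℝ, ENNReal.ofReal (|g x| ^ p) ≤ 1)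
    (hp : 1 < p) : lamf g 0 ≤ 1 := by
  apply csInf_le (Sk_bddBelow g 0)
  refine ⟨zero_le_one, ?_⟩
  have := cheb hg hL hp (l := 1) one_pos
  simpa using this

end basic


noncomputable def nuf (g : ℝ → ℝ) (k : ℕ) : ℝ := lamf g k + (2:ℝ)⁻¹ ^ (k+1)
noncomputable def tauf (g : ℝ → ℝ) (k : ℕ) : ℝ := lamf g (k+1) - (2:ℝ)⁻¹ ^ (k+1)
noncomputable def cf (g : ℝ → ℝ) (k : ℕ) : ℝ :=
  max (lamf g (k+1) - lamf g k - (2:ℝ)⁻¹ ^ k) 0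

section main

variable {p : ℝ} {g : ℝ → ℝ}

lemma cf_nonneg (g : ℝ → ℝ) (k : ℕ) : 0 ≤ cf g k := le_max_right _ _

lemma tauf_sub_nuf (g : ℝ → ℝ) (k : ℕ) :
    tauf g k - nuf g k = lamf g (k+1) - lamf g k - (2:ℝ)⁻¹ ^ k := by
  unfold tauf nuf
  have : (2:ℝ)⁻¹ ^ (k+1) + (2:ℝ)⁻¹ ^ (k+1) = (2:ℝ)⁻¹ ^ k := by
    rw [pow_succ]; ring
  linarith

lemma cf_eq_of_pos {k : ℕ} (h : 0 < cf g k) : cf g k = tauf g k - nuf g k := by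
  rw [tauf_sub_nuf]
  unfold cf at h ⊢
  rcases max_cases (lamf g (k+1) - lamf g k - (2:ℝ)⁻¹ ^ k) (0:ℝ) with ⟨h1, h2⟩ | ⟨h1, h2⟩
  · rw [h1]
  · rw [h1] at h; exact absurd h (lt_irrefl _)

lemma nuf_lt_tauf_of_pos {k : ℕ} (h : 0 < cf g k) : nuf g k < tauf g k := by
  have := cf_eq_of_pos h
  linarith

/-- Key pointwise estimate: the sum of the band gaps is dominated by `|g x - g y| ^ p`. -/
lemma pointwise_band_sum (hg : Measurable g)
    (hL : ∫⁻ x : ℝ, ENNReal.ofReal (|g x| ^ p) ≤ 1) (hp : 1 < p) (n : ℕ) (x y : ℝ) :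
    ∑ k ∈ Finset.range n,
      (if tauf g k < |g x| ∧ |g y| ≤ nuf g k then cf g k ^ p else 0)
      ≤ |g x - g y| ^ p := by
  classical
  set T : Finset ℕ := (Finset.range n).filter
    (fun k => 0 < cf g k ∧ tauf g k < |g x| ∧ |g y| ≤ nuf g k) with hT
  have step1 : ∑ k ∈ Finset.range n,
      (if tauf g k < |g x| ∧ |g y| ≤ nuf g k then cf g k ^ p else 0)
      ≤ ∑ k ∈ T, cf g k ^ p := by
    rw [hT, Finset.sum_filter]
    apply Finset.sum_le_sum
    intro k _
    by_cases hc : tauf g k < |g x| ∧ |g y| ≤ nuf g k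
    · by_cases hcf : 0 < cf g k
      · simp [hc, hcf]
      · have : cf g k = 0 := le_antisymm (not_lt.mp hcf) (cf_nonneg g k)
        simp [hc, hcf, this, Real.zero_rpow (by positivity : p ≠ 0)]
    · simp [hc]
  rcases T.eq_empty_or_nonempty with hTe | hTne
  · rw [hTe] at step1
    simpa using step1.trans (Real.rpow_nonneg (abs_nonneg _) p)
  have hgyx : |g y| < |g x| := by
    obtain ⟨k₀, hk₀⟩ := hTne
    rw [hT, Finset.mem_filter] at hk₀
    obtain ⟨-, hpos, hxk, hyk⟩ := hk₀
    exact lt_of_le_of_lt hyk ((nuf_lt_tauf_of_pos hpos).trans hxk)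
  have hsub : ∀ k ∈ T, Ioc (nuf g k) (tauf g k) ⊆ Ioc (|g y|) (|g x|) := by
    intro k hk
    rw [hT, Finset.mem_filter] at hk
    exact Ioc_subset_Ioc hk.2.2.2 hk.2.2.1.le
  have hdisj : (T : Set ℕ).PairwiseDisjoint (fun k => Ioc (nuf g k) (tauf g k)) := by
    intro j hj k hk hjk
    rw [Finset.coe_filter, Set.mem_setOf_eq] at hj hk
    have key : ∀ a b : ℕ, a < b → Disjoint (Ioc (nuf g a) (tauf g a)) (Ioc (nuf g b) (tauf g b)) := by
      intro a b hab
      have h1 : tauf g a ≤ lamf g (a+1) := by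
        unfold tauf; have : (0:ℝ) < (2:ℝ)⁻¹ ^ (a+1) := by positivity
        linarith
      have h2 : lamf g (a+1) ≤ lamf g b := lamf_mono hg hL hp hab
      have h3 : lamf g b ≤ nuf g b := by
        unfold nuf; have : (0:ℝ) < (2:ℝ)⁻¹ ^ (b+1) := by positivity
        linarith
      apply Set.disjoint_left.mpr
      intro z hza hzb
      have := hza.2
      have := hzb.1
      linarith
    rcases lt_or_gt_of_ne hjk with h | h
    · exact key j k h
    · exact (key k j h).symm
  have hvol : ∑ k ∈ T, ENNReal.ofReal (cf g k)
      ≤ ENNReal.ofReal (|g x| - |g y|) := by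
    have h1 : ∀ k ∈ T, ENNReal.ofReal (cf g k) = volume (Ioc (nuf g k) (tauf g k)) := by
      intro k hk
      rw [hT, Finset.mem_filter] at hk
      rw [Real.volume_Ioc, cf_eq_of_pos hk.2.1]
    rw [Finset.sum_congr rfl h1]
    rw [← measure_biUnion_finset hdisj (fun k _ => measurableSet_Ioc)]
    calc volume (⋃ k ∈ T, Ioc (nuf g k) (tauf g k)) ≤ volume (Ioc (|g y|) (|g x|)) := by
          apply measure_mono
          exact Set.iUnion₂_subset hsub
      _ = ENNReal.ofReal (|g x| - |g y|) := Real.volume_Ioc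
  have hsum_le : ∑ k ∈ T, cf g k ≤ |g x| - |g y| := by
    rw [← ENNReal.ofReal_sum_of_nonneg (fun k _ => cf_nonneg g k)] at hvol
    exact (ENNReal.ofReal_le_ofReal_iff (by linarith)).mp hvol
  calc ∑ k ∈ Finset.range n,
      (if tauf g k < |g x| ∧ |g y| ≤ nuf g k then cf g k ^ p else 0)
      ≤ ∑ k ∈ T, cf g k ^ p := step1
    _ ≤ (∑ k ∈ T, cf g k) ^ p := sum_rpow_le_rpow_sum hp.le (fun k _ => cf_nonneg g k)
    _ ≤ (|g x| - |g y|) ^ p :=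
        Real.rpow_le_rpow (Finset.sum_nonneg fun k _ => cf_nonneg g k) hsum_le (by linarith)
    _ ≤ |g x - g y| ^ p :=
        Real.rpow_le_rpow (by linarith) (abs_sub_abs_le_abs_sub _ _) (by linarith)

lemma indicator_one_mul {B : Set ℝ} {h : ℝ → ℝ≥0∞} (y : ℝ) :
    B.indicator (fun _ => (1:ℝ≥0∞)) y * h y = B.indicator h y := by
  by_cases hy : y ∈ B <;> simp [hy]

/-- The central estimate: the band gaps are `ℓ^p`-summable against the Gagliardo seminorm. -/
lemma sum_cf_rpow_le (hg : Measurable g)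
    (hL : ∫⁻ x : ℝ, ENNReal.ofReal (|g x| ^ p) ≤ 1) (hp : 1 < p)
    (hG : gagP p g ≤ 1) (n : ℕ) :
    ∑ k ∈ Finset.range n, cf g k ^ p ≤ 2 := by
  classical
  set A : ℕ → Set ℝ := fun k => {x | tauf g k < |g x|} with hA
  set B : ℕ → Set ℝ := fun k => {y | |g y| ≤ nuf g k} with hB
  have hAmeas : ∀ k, MeasurableSet (A k) := fun k =>
    measurableSet_lt measurable_const hg.abs
  have hBmeas : ∀ k, MeasurableSet (B k) := fun k =>
    measurableSet_le hg.abs measurable_const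
  set W : ℕ → ℝ → ℝ → ℝ≥0∞ := fun k x y =>
    (A k).indicator (fun _ => (1:ℝ≥0∞)) x *
      ((B k).indicator (fun _ => (1:ℝ≥0∞)) y *
        ENNReal.ofReal (cf g k ^ p * ((x - y) ^ 2)⁻¹)) with hW
  -- measurability of the inner integrand on the product
  have hprodmeas : ∀ k, Measurable (fun q : ℝ × ℝ =>
      (B k).indicator (fun _ => (1:ℝ≥0∞)) q.2
        * ENNReal.ofReal (cf g k ^ p * ((q.1 - q.2) ^ 2)⁻¹)) := by
    intro k
    apply Measurable.mul
    · exact (measurable_one.indicator (hBmeas k)).comp measurable_snd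
    · apply Measurable.ennreal_ofReal
      exact measurable_const.mul (((measurable_fst.sub measurable_snd).pow_const 2).inv)
  -- pointwise bound by the Gagliardo integrand
  have hpoint : ∀ x y : ℝ, ∑ k ∈ Finset.range n, W k x y
      ≤ ENNReal.ofReal (|g x - g y| ^ p / |x - y| ^ 2) := by
    intro x y
    have hterm : ∀ k, W k x y = ENNReal.ofReal
        (if tauf g k < |g x| ∧ |g y| ≤ nuf g k then cf g k ^ p * ((x - y) ^ 2)⁻¹ else 0) := by
      intro k
      simp only [hW]
      by_cases hx : x ∈ A k <;> by_cases hy : y ∈ B k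
      · rw [indicator_of_mem hx, indicator_of_mem hy, one_mul, one_mul, if_pos ⟨hx, hy⟩]
      · rw [indicator_of_mem hx, indicator_of_notMem hy, one_mul, zero_mul,
          if_neg (fun h => hy h.2), ENNReal.ofReal_zero]
      · rw [indicator_of_notMem hx, zero_mul, if_neg (fun h => hx h.1), ENNReal.ofReal_zero]
      · rw [indicator_of_notMem hx, zero_mul, if_neg (fun h => hx h.1), ENNReal.ofReal_zero]
    simp_rw [hterm]
    rw [← ENNReal.ofReal_sum_of_nonneg (fun k _ => by
      split_ifs with h
      · exact mul_nonneg (Real.rpow_nonneg (cf_nonneg g k) p) (by positivity)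
      · exact le_rfl)]
    apply ENNReal.ofReal_le_ofReal
    have hfact : ∀ k, (if tauf g k < |g x| ∧ |g y| ≤ nuf g k
        then cf g k ^ p * ((x - y) ^ 2)⁻¹ else 0)
        = (if tauf g k < |g x| ∧ |g y| ≤ nuf g k then cf g k ^ p else 0) * ((x - y) ^ 2)⁻¹ := by
      intro k
      by_cases hc : tauf g k < |g x| ∧ |g y| ≤ nuf g k <;> simp [hc]
    simp_rw [hfact, ← Finset.sum_mul]
    rw [div_eq_mul_inv, ← sq_abs (x - y)]
    exact mul_le_mul_of_nonneg_right (pointwise_band_sum hg hL hp n x y) (by positivity)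
  -- the double integral of the sum is below the Gagliardo seminorm
  have hsum_int : ∑ k ∈ Finset.range n, (∫⁻ x : ℝ, ∫⁻ y : ℝ, W k x y) ≤ gagP p g := by
    have hWymeas : ∀ k x, Measurable (fun y => W k x y) := by
      intro k x
      apply Measurable.const_mul
      exact (hprodmeas k).comp measurable_prodMk_left
    have hinner_eq : ∀ k x, (∫⁻ y : ℝ, W k x y)
        = (A k).indicator (fun _ => (1:ℝ≥0∞)) x *
          ∫⁻ y : ℝ, (B k).indicator (fun _ => (1:ℝ≥0∞)) y *
            ENNReal.ofReal (cf g k ^ p * ((x - y) ^ 2)⁻¹) := by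
      intro k x
      simp only [hW]
      exact lintegral_const_mul' _ _ (by by_cases hx : x ∈ A k <;> simp [hx])
    have hWxmeas : ∀ k, Measurable (fun x => ∫⁻ y : ℝ, W k x y) := by
      intro k
      simp_rw [hinner_eq k]
      apply Measurable.mul
      · exact measurable_one.indicator (hAmeas k)
      · exact (hprodmeas k).lintegral_prod_right'
    calc ∑ k ∈ Finset.range n, (∫⁻ x : ℝ, ∫⁻ y : ℝ, W k x y)
        = ∫⁻ x : ℝ, ∑ k ∈ Finset.range n, ∫⁻ y : ℝ, W k x y := by
          rw [lintegral_finset_sum _ (fun k _ => hWxmeas k)]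
      _ = ∫⁻ x : ℝ, ∫⁻ y : ℝ, ∑ k ∈ Finset.range n, W k x y := by
          congr 1; funext x
          rw [lintegral_finset_sum _ (fun k _ => hWymeas k x)]
      _ ≤ ∫⁻ x : ℝ, ∫⁻ y : ℝ, ENNReal.ofReal (|g x - g y| ^ p / |x - y| ^ 2) :=
          lintegral_mono (fun x => lintegral_mono (fun y => hpoint x y))
      _ = gagP p g := rfl
  -- each summand is bounded below
  have hlow : ∀ k, ENNReal.ofReal (cf g k ^ p * 2⁻¹) ≤ ∫⁻ x : ℝ, ∫⁻ y : ℝ, W k x y := by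
    intro k
    rcases (cf_nonneg g k).eq_or_lt with hc0 | hcpos
    · rw [← hc0, Real.zero_rpow (by positivity : p ≠ 0), zero_mul, ENNReal.ofReal_zero]
      exact zero_le
    -- the inner integral is bounded below uniformly in x
    have hnuf_pos : 0 ≤ nuf g k := by
      unfold nuf
      have h1 := lamf_nonneg hg hL hp k
      positivity
    have htauf : 0 ≤ tauf g k := le_of_lt (hnuf_pos.trans_lt (nuf_lt_tauf_of_pos hcpos))
    have hinner : ∀ x : ℝ, ENNReal.ofReal (cf g k ^ p) * ENNReal.ofReal (((2:ℝ)⁻¹ ^ k)⁻¹)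
        ≤ ∫⁻ y : ℝ, (B k).indicator (fun _ => (1:ℝ≥0∞)) y *
            ENNReal.ofReal (cf g k ^ p * ((x - y) ^ 2)⁻¹) := by
      intro x
      have hBE : B k = {y : ℝ | nuf g k < |g y|}ᶜ := by
        ext y; simp [hB, not_lt]
      have hker := kernel_lb (E := {y : ℝ | nuf g k < |g y|})
        (measurableSet_lt measurable_const hg.abs)
        (show (0:ℝ) < (2:ℝ)⁻¹ ^ k by positivity)
        (by
          have : lamf g k < nuf g k := by
            unfold nuf; have : (0:ℝ) < (2:ℝ)⁻¹ ^ (k+1) := by positivity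
            linarith
          exact muf_le_of_lt hg hL hp this) x
      calc ENNReal.ofReal (cf g k ^ p) * ENNReal.ofReal (((2:ℝ)⁻¹ ^ k)⁻¹)
          = ENNReal.ofReal (cf g k ^ p) * ENNReal.ofReal (1 / (2:ℝ)⁻¹ ^ k) := by
            rw [one_div]
        _ ≤ ENNReal.ofReal (cf g k ^ p) *
            ∫⁻ y in {y : ℝ | nuf g k < |g y|}ᶜ, ENNReal.ofReal (((x - y) ^ 2)⁻¹) :=
            mul_le_mul_right hker _
        _ = ∫⁻ y in B k, ENNReal.ofReal (cf g k ^ p) * ENNReal.ofReal (((x - y) ^ 2)⁻¹) := by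
            rw [hBE, lintegral_const_mul' _ _ ENNReal.ofReal_ne_top]
        _ = ∫⁻ y in B k, ENNReal.ofReal (cf g k ^ p * ((x - y) ^ 2)⁻¹) := by
            congr 1; funext y
            rw [← ENNReal.ofReal_mul (Real.rpow_nonneg (cf_nonneg g k) p)]
        _ = ∫⁻ y : ℝ, (B k).indicator
              (fun y => ENNReal.ofReal (cf g k ^ p * ((x - y) ^ 2)⁻¹)) y := by
            rw [lintegral_indicator (hBmeas k)]
        _ = ∫⁻ y : ℝ, (B k).indicator (fun _ => (1:ℝ≥0∞)) y *
              ENNReal.ofReal (cf g k ^ p * ((x - y) ^ 2)⁻¹) := by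
            have hind : ∀ y : ℝ, (B k).indicator (fun _ => (1:ℝ≥0∞)) y *
                ENNReal.ofReal (cf g k ^ p * ((x - y) ^ 2)⁻¹)
                = (B k).indicator (fun y => ENNReal.ofReal (cf g k ^ p * ((x - y) ^ 2)⁻¹)) y :=
              fun y => indicator_one_mul (h := fun y => ENNReal.ofReal (cf g k ^ p * ((x - y) ^ 2)⁻¹)) y
            simp_rw [hind]
    have houter : ENNReal.ofReal (cf g k ^ p) * ENNReal.ofReal (((2:ℝ)⁻¹ ^ k)⁻¹)
        * ENNReal.ofReal ((2:ℝ)⁻¹ ^ (k+1)) ≤ ∫⁻ x : ℝ, ∫⁻ y : ℝ, W k x y := by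
      have hvolA : ENNReal.ofReal ((2:ℝ)⁻¹ ^ (k+1)) ≤ volume (A k) := by
        by_contra hcon
        push_neg at hcon
        refine lt_muf_of_lt hg hL hp htauf ?_ hcon.le
        unfold tauf
        have h5 : (0:ℝ) < (2:ℝ)⁻¹ ^ (k+1) := by positivity
        linarith
      calc ENNReal.ofReal (cf g k ^ p) * ENNReal.ofReal (((2:ℝ)⁻¹ ^ k)⁻¹)
            * ENNReal.ofReal ((2:ℝ)⁻¹ ^ (k+1))
          ≤ ENNReal.ofReal (cf g k ^ p) * ENNReal.ofReal (((2:ℝ)⁻¹ ^ k)⁻¹) * volume (A k) :=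
            mul_le_mul_right hvolA _
        _ = ∫⁻ x : ℝ, (A k).indicator
              (fun _ => ENNReal.ofReal (cf g k ^ p) * ENNReal.ofReal (((2:ℝ)⁻¹ ^ k)⁻¹)) x := by
            rw [lintegral_indicator (hAmeas k), setLIntegral_const]
        _ ≤ ∫⁻ x : ℝ, ∫⁻ y : ℝ, W k x y := by
            apply lintegral_mono
            intro x
            by_cases hx : x ∈ A k
            · rw [indicator_of_mem hx]
              calc ENNReal.ofReal (cf g k ^ p) * ENNReal.ofReal (((2:ℝ)⁻¹ ^ k)⁻¹)
                  ≤ ∫⁻ y : ℝ, (B k).indicator (fun _ => (1:ℝ≥0∞)) y *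
                      ENNReal.ofReal (cf g k ^ p * ((x - y) ^ 2)⁻¹) := hinner x
                _ = ∫⁻ y : ℝ, W k x y := by
                    simp only [hW]
                    rw [lintegral_const_mul' _ _ (by
                      by_cases hx' : x ∈ A k <;> simp [hx'])]
                    rw [indicator_of_mem hx, one_mul]
            · rw [indicator_of_notMem hx]
              exact zero_le
    refine le_trans (le_of_eq ?_) houter
    rw [← ENNReal.ofReal_mul (Real.rpow_nonneg (cf_nonneg g k) p),
      ← ENNReal.ofReal_mul (mul_nonneg (Real.rpow_nonneg (cf_nonneg g k) p) (by positivity))]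
    congr 1
    have h2 : ((2:ℝ)⁻¹ ^ k)⁻¹ * (2:ℝ)⁻¹ ^ (k+1) = 2⁻¹ := by
      rw [pow_succ]
      field_simp
    rw [mul_assoc, h2]
  -- conclusion
  have htotal : ENNReal.ofReal (∑ k ∈ Finset.range n, cf g k ^ p * 2⁻¹) ≤ 1 := by
    rw [ENNReal.ofReal_sum_of_nonneg (fun k _ =>
      mul_nonneg (Real.rpow_nonneg (cf_nonneg g k) p) (by norm_num))]
    exact le_trans (Finset.sum_le_sum (fun k _ => hlow k)) (hsum_int.trans hG)
  rw [← Finset.sum_mul, ENNReal.ofReal_le_one] at htotal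
  linarith [htotal]


lemma lamf_growth (hg : Measurable g)
    (hL : ∫⁻ x : ℝ, ENNReal.ofReal (|g x| ^ p) ≤ 1) (hp : 1 < p)
    (hG : gagP p g ≤ 1) (n : ℕ) :
    lamf g n ≤ 3 + 2 * (n:ℝ) ^ (1 - 1/p) := by
  have hstep : ∀ m : ℕ, lamf g m ≤ lamf g 0 + ∑ k ∈ Finset.range m, (cf g k + (2:ℝ)⁻¹ ^ k) := by
    intro m
    induction m with
    | zero => simp
    | succ m ih =>
      have h1 : lamf g (m+1) - lamf g m - (2:ℝ)⁻¹ ^ m ≤ cf g m := le_max_left _ _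
      rw [Finset.sum_range_succ]
      linarith
  have hgeom : ∑ k ∈ Finset.range n, (2:ℝ)⁻¹ ^ k ≤ 2 := by
    have h := geom_sum_eq (by norm_num : (2:ℝ)⁻¹ ≠ 1) n
    rw [h]
    have h2 : (0:ℝ) ≤ (2:ℝ)⁻¹ ^ n := by positivity
    have : ((2:ℝ)⁻¹ ^ n - 1) / ((2:ℝ)⁻¹ - 1) = 2 * (1 - (2:ℝ)⁻¹ ^ n) := by ring
    rw [this]
    nlinarith
  have hsplit : ∑ k ∈ Finset.range n, (cf g k + (2:ℝ)⁻¹ ^ k)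
      = ∑ k ∈ Finset.range n, cf g k + ∑ k ∈ Finset.range n, (2:ℝ)⁻¹ ^ k :=
    Finset.sum_add_distrib
  have hcfsum : ∑ k ∈ Finset.range n, cf g k ≤ 2 * (n:ℝ) ^ (1 - 1/p) := by
    have h1 := sum_le_card_rpow (n := n) (c := cf g) (fun k => cf_nonneg g k) hp
    have h2 : (∑ k ∈ Finset.range n, cf g k ^ p) ^ (1/p) ≤ (2:ℝ) ^ (1/p) := by
      apply Real.rpow_le_rpow (Finset.sum_nonneg fun k _ => Real.rpow_nonneg (cf_nonneg g k) p)
        (sum_cf_rpow_le hg hL hp hG n) (by positivity)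
    have h3 : (2:ℝ) ^ (1/p) ≤ 2 := by
      calc (2:ℝ) ^ (1/p) ≤ (2:ℝ) ^ (1:ℝ) :=
            Real.rpow_le_rpow_of_exponent_le (by norm_num)
              (by rw [div_le_one (by linarith)]; linarith)
        _ = 2 := Real.rpow_one 2
    have h4 : (0:ℝ) ≤ (n:ℝ) ^ (1 - 1/p) := Real.rpow_nonneg (Nat.cast_nonneg n) _
    calc ∑ k ∈ Finset.range n, cf g k
        ≤ (n:ℝ) ^ (1 - 1/p) * (∑ k ∈ Finset.range n, cf g k ^ p) ^ (1/p) := h1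
      _ ≤ (n:ℝ) ^ (1 - 1/p) * 2 := by
          exact mul_le_mul_of_nonneg_left (h2.trans h3) h4
      _ = 2 * (n:ℝ) ^ (1 - 1/p) := by ring
  have h0 := lamf_zero_le_one hg hL hp
  calc lamf g n ≤ lamf g 0 + ∑ k ∈ Finset.range n, (cf g k + (2:ℝ)⁻¹ ^ k) := hstep n
    _ ≤ 1 + (2 * (n:ℝ) ^ (1 - 1/p) + 2) := by rw [hsplit]; linarith
    _ = 3 + 2 * (n:ℝ) ^ (1 - 1/p) := by ring

noncomputable def betaf (p : ℝ) (n : ℕ) : ℝ :=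
  if n = 0 then 1 else 4 + 2 * (n:ℝ) ^ (1 - 1/p)

lemma muf_betaf (hg : Measurable g)
    (hL : ∫⁻ x : ℝ, ENNReal.ofReal (|g x| ^ p) ≤ 1) (hp : 1 < p)
    (hG : gagP p g ≤ 1) (n : ℕ) :
    muf g (betaf p n) ≤ ENNReal.ofReal ((2:ℝ)⁻¹ ^ n) := by
  rcases Nat.eq_zero_or_pos n with rfl | hn
  · have := cheb hg hL hp (l := 1) one_pos
    simpa [betaf] using this
  · have hlt : lamf g n < betaf p n := by
      have h1 := lamf_growth hg hL hp hG n
      have hne : n ≠ 0 := hn.ne'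
      rw [betaf, if_neg hne]
      linarith
    exact muf_le_of_lt hg hL hp hlt


end main

set_option maxHeartbeats 1000000 in
lemma core_bound {s p : ℝ} (hs : s ∈ Set.Ioo (0:ℝ) 1) (hp : 1 < p) (hsp : s * p = 1)
    {α : ℝ} (hα0 : 0 ≤ α)
    (hαlt : α * ((2:ℝ) ^ (1/(1-s)) * (2:ℝ) ^ (1/(1-s))) < Real.log 2) :
    ∃ C : ℝ, ∀ g : ℝ → ℝ, Measurable g →
      (∫⁻ x : ℝ, ENNReal.ofReal (|g x| ^ p)) ≤ 1 → gagP p g ≤ 1 →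
      ∫⁻ x : ℝ, ENNReal.ofReal (Phi p (α * |g x| ^ (1 / (1 - s)))) ≤ ENNReal.ofReal C := by
  classical
  obtain ⟨hs0, hs1⟩ := hs
  have h1s : 0 < 1 - s := by linarith
  set q : ℝ := 1 / (1 - s) with hqdef
  have hq0 : 0 < q := by positivity
  have hq1 : 1 ≤ q := by
    rw [hqdef, le_div_iff₀ h1s]
    linarith
  have hp0 : (0:ℝ) < p := by linarith
  have hsval : s = 1 / p := by
    field_simp
    linarith [hsp]
  have hex : (1 - 1/p) * q = 1 := by
    rw [hqdef, ← hsval]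
    field_simp
  have hqp : p ≤ q * (p - 1) := by
    have h1 : 1 - s = (p - 1)/p := by
      rw [hsval]; field_simp
    have h2 : q * (p - 1) = p := by
      rw [hqdef, h1, one_div_div]
      exact div_mul_cancel₀ p (by linarith : p - (1:ℝ) ≠ 0)
    linarith
  set N : ℕ := ⌈p - 2⌉₊ with hN
  have hNp : p - 1 ≤ (N:ℝ) + 1 := by
    have := Nat.le_ceil (p - 2)
    rw [← hN] at this
    linarith
  set K0 : ℝ := (2:ℝ) ^ q * (4:ℝ) ^ q with hK0
  set K1 : ℝ := (2:ℝ) ^ q * (2:ℝ) ^ q with hK1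
  have hK1pos : 0 < K1 := by rw [hK1]; positivity
  have hK0pos : 0 < K0 := by rw [hK0]; positivity
  set r : ℝ := Real.exp (α * K1) * 2⁻¹ with hr
  have hr0 : 0 ≤ r := by positivity
  have hr1 : r < 1 := by
    rw [hr]
    have h1 : Real.exp (α * K1) < 2 := by
      have h2 : α * K1 < Real.log 2 := hαlt
      calc Real.exp (α * K1) < Real.exp (Real.log 2) := Real.exp_lt_exp.mpr h2
        _ = 2 := Real.exp_log (by norm_num)
    linarith
  set M : ℝ := Real.exp (α * (K0 + K1)) with hM
  have hMpos : 0 < M := Real.exp_pos _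
  set C1 : ℝ := α ^ (N+1) * Real.exp α with hC1
  have hC1nn : 0 ≤ C1 := by rw [hC1]; positivity
  set C2 : ℝ := M * (1 - r)⁻¹ with hC2
  have hC2nn : 0 ≤ C2 := by
    rw [hC2]
    have : 0 < 1 - r := by linarith
    positivity
  refine ⟨C1 + C2, ?_⟩
  intro g hg hL hG
  -- the sets
  set S : Set ℝ := {x | |g x| ≤ 1} with hSdef
  have hSmeas : MeasurableSet S := measurableSet_le hg.abs measurable_const
  have hScompl : Sᶜ = {x : ℝ | 1 < |g x|} := by
    ext x; simp [hSdef, not_le]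
  -- part (a) : the integral over S
  have hparta : ∫⁻ x in S, ENNReal.ofReal (Phi p (α * |g x| ^ q)) ≤ ENNReal.ofReal C1 := by
    have hpoint : ∀ x ∈ S, ENNReal.ofReal (Phi p (α * |g x| ^ q))
        ≤ ENNReal.ofReal (C1 * |g x| ^ p) := by
      intro x hx
      apply ENNReal.ofReal_le_ofReal
      have hx1 : |g x| ≤ 1 := hx
      have hxq1 : |g x| ^ q ≤ 1 := Real.rpow_le_one (abs_nonneg _) hx1 hq0.le
      have ht0 : 0 ≤ α * |g x| ^ q := mul_nonneg hα0 (Real.rpow_nonneg (abs_nonneg _) q)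
      have htα : α * |g x| ^ q ≤ α := mul_le_of_le_one_right hα0 hxq1
      have hstep1 : Phi p (α * |g x| ^ q)
          ≤ (α * |g x| ^ q) ^ (N+1) * Real.exp (α * |g x| ^ q) :=
        Phi_le_pow_mul_exp p ht0
      have hstep2 : (α * |g x| ^ q) ^ (N+1) = α ^ (N+1) * |g x| ^ (q * ((N:ℝ)+1)) := by
        rw [mul_pow]
        congr 1
        rw [← Real.rpow_natCast (|g x| ^ q) (N+1), ← Real.rpow_mul (abs_nonneg _)]
        push_cast
        ring_nf
      have hstep3 : |g x| ^ (q * ((N:ℝ)+1)) ≤ |g x| ^ p := by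
        rcases eq_or_lt_of_le (abs_nonneg (g x)) with h0 | h0
        · rw [← h0, Real.zero_rpow, Real.zero_rpow] <;> positivity
        · apply Real.rpow_le_rpow_of_exponent_ge h0 hx1
          calc p ≤ q * (p - 1) := hqp
            _ ≤ q * ((N:ℝ)+1) := by
                apply mul_le_mul_of_nonneg_left hNp hq0.le
      have hstep4 : Real.exp (α * |g x| ^ q) ≤ Real.exp α := Real.exp_le_exp.mpr htα
      have hxqnn : (0:ℝ) ≤ |g x| ^ (q * ((N:ℝ)+1)) := Real.rpow_nonneg (abs_nonneg _) _
      have hαNnn : (0:ℝ) ≤ α ^ (N+1) := by positivity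
      calc Phi p (α * |g x| ^ q) ≤ (α * |g x| ^ q) ^ (N+1) * Real.exp (α * |g x| ^ q) := hstep1
        _ = α ^ (N+1) * |g x| ^ (q * ((N:ℝ)+1)) * Real.exp (α * |g x| ^ q) := by rw [hstep2]
        _ ≤ α ^ (N+1) * |g x| ^ (q * ((N:ℝ)+1)) * Real.exp α := by
            apply mul_le_mul_of_nonneg_left hstep4 (by positivity)
        _ ≤ α ^ (N+1) * |g x| ^ p * Real.exp α :=
            mul_le_mul_of_nonneg_right (mul_le_mul_of_nonneg_left hstep3 hαNnn)
              (Real.exp_pos α).le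
        _ = C1 * |g x| ^ p := by rw [hC1]; ring
    calc ∫⁻ x in S, ENNReal.ofReal (Phi p (α * |g x| ^ q))
        ≤ ∫⁻ x in S, ENNReal.ofReal (C1 * |g x| ^ p) :=
          setLIntegral_mono (by fun_prop) hpoint
      _ ≤ ∫⁻ x, ENNReal.ofReal (C1 * |g x| ^ p) := setLIntegral_le_lintegral _ _
      _ = ENNReal.ofReal C1 * ∫⁻ x, ENNReal.ofReal (|g x| ^ p) := by
          simp_rw [ENNReal.ofReal_mul hC1nn]
          exact lintegral_const_mul' _ _ ENNReal.ofReal_ne_top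
      _ ≤ ENNReal.ofReal C1 * 1 := mul_le_mul_right hL _
      _ = ENNReal.ofReal C1 := mul_one _
  -- part (b) : the integral over the complement
  set Sn : ℕ → Set ℝ := fun n => {x | betaf p n < |g x|} ∩ {x | |g x| ≤ betaf p (n+1)}
    with hSn
  set Z : Set ℝ := ⋂ n, {x | betaf p n < |g x|} with hZ
  have hZ0 : volume Z = 0 := by
    have hZle : ∀ n : ℕ, volume Z ≤ ENNReal.ofReal ((2:ℝ)⁻¹ ^ n) := by
      intro n
      calc volume Z ≤ volume {x : ℝ | betaf p n < |g x|} :=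
            measure_mono (Set.iInter_subset _ n)
        _ ≤ ENNReal.ofReal ((2:ℝ)⁻¹ ^ n) := muf_betaf hg hL hp hG n
    have htend : Tendsto (fun n : ℕ => ENNReal.ofReal ((2:ℝ)⁻¹ ^ n)) atTop (𝓝 0) := by
      have h1 : Tendsto (fun n : ℕ => (2:ℝ)⁻¹ ^ n) atTop (𝓝 0) :=
        tendsto_pow_atTop_nhds_zero_of_lt_one (by norm_num) (by norm_num)
      have h2 := (ENNReal.tendsto_ofReal h1)
      simpa using h2
    exact le_antisymm (ge_of_tendsto' htend hZle) zero_le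
  have hcover : Sᶜ ⊆ Z ∪ ⋃ n, Sn n := by
    rw [hScompl]
    intro x hx
    simp only [Set.mem_setOf_eq] at hx
    by_cases hxz : ∀ n, betaf p n < |g x|
    · exact Or.inl (Set.mem_iInter.mpr hxz)
    · right
      push_neg at hxz
      have hP : ∃ m : ℕ, |g x| ≤ betaf p m := by
        obtain ⟨m, hm⟩ := hxz
        exact ⟨m, hm⟩
      have hn := Nat.find_spec hP
      have hn0 : Nat.find hP ≠ 0 := by
        intro h0
        rw [h0] at hn
        rw [betaf, if_pos rfl] at hn
        linarith
      obtain ⟨m', hm'⟩ := Nat.exists_eq_succ_of_ne_zero hn0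
      refine Set.mem_iUnion.mpr ⟨m', ?_, ?_⟩
      · have := Nat.find_min hP (by omega : m' < Nat.find hP)
        push_neg at this
        exact this
      · rw [← Nat.succ_eq_add_one, ← hm']
        exact hn
  have hbetarpow : ∀ n : ℕ, betaf p (n+1) ^ q ≤ K0 + K1 * ((n:ℝ)+1) := by
    intro n
    have hb : betaf p (n+1) = 4 + 2 * (((n:ℕ)+1 : ℕ):ℝ) ^ (1 - 1/p) := by
      rw [betaf, if_neg (Nat.succ_ne_zero n)]
    rw [hb]
    have hc : (0:ℝ) ≤ 2 * (((n:ℕ)+1 : ℕ):ℝ) ^ (1 - 1/p) := by positivity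
    have h1 := add_rpow_le_two_rpow (a := 4) (b := 2 * (((n:ℕ)+1 : ℕ):ℝ) ^ (1 - 1/p))
      hq1 (by norm_num) hc
    have h2 : (2 * (((n:ℕ)+1 : ℕ):ℝ) ^ (1 - 1/p)) ^ q
        = (2:ℝ) ^ q * ((n:ℝ)+1) := by
      rw [Real.mul_rpow (by norm_num) (Real.rpow_nonneg (by positivity) _)]
      congr 1
      rw [← Real.rpow_mul (by positivity), hex, Real.rpow_one]
      push_cast
      ring
    rw [h2] at h1
    calc (4 + 2 * (((n:ℕ)+1 : ℕ):ℝ) ^ (1 - 1/p)) ^ q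
        ≤ (2:ℝ) ^ q * (4:ℝ) ^ q + (2:ℝ) ^ q * ((2:ℝ) ^ q * ((n:ℝ)+1)) := h1
      _ = K0 + K1 * ((n:ℝ)+1) := by rw [hK0, hK1]; ring
  have hSnbound : ∀ n : ℕ, ∫⁻ x in Sn n, ENNReal.ofReal (Phi p (α * |g x| ^ q))
      ≤ ENNReal.ofReal (M * r ^ n) := by
    intro n
    have hpt : ∀ x ∈ Sn n, ENNReal.ofReal (Phi p (α * |g x| ^ q))
        ≤ ENNReal.ofReal (Real.exp (α * (K0 + K1 * ((n:ℝ)+1)))) := by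
      intro x hx
      apply ENNReal.ofReal_le_ofReal
      have ht0 : 0 ≤ α * |g x| ^ q := mul_nonneg hα0 (Real.rpow_nonneg (abs_nonneg _) q)
      have hxb : |g x| ≤ betaf p (n+1) := hx.2
      have hgq : |g x| ^ q ≤ K0 + K1 * ((n:ℝ)+1) := by
        calc |g x| ^ q ≤ betaf p (n+1) ^ q :=
              Real.rpow_le_rpow (abs_nonneg _) hxb hq0.le
          _ ≤ K0 + K1 * ((n:ℝ)+1) := hbetarpow n
      calc Phi p (α * |g x| ^ q) ≤ Real.exp (α * |g x| ^ q) := Phi_le_exp p ht0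
        _ ≤ Real.exp (α * (K0 + K1 * ((n:ℝ)+1))) :=
            Real.exp_le_exp.mpr (mul_le_mul_of_nonneg_left hgq hα0)
    have hvolSn : volume (Sn n) ≤ ENNReal.ofReal ((2:ℝ)⁻¹ ^ n) := by
      calc volume (Sn n) ≤ volume {x : ℝ | betaf p n < |g x|} :=
            measure_mono Set.inter_subset_left
        _ ≤ ENNReal.ofReal ((2:ℝ)⁻¹ ^ n) := muf_betaf hg hL hp hG n
    calc ∫⁻ x in Sn n, ENNReal.ofReal (Phi p (α * |g x| ^ q))
        ≤ ∫⁻ _x in Sn n, ENNReal.ofReal (Real.exp (α * (K0 + K1 * ((n:ℝ)+1)))) :=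
          setLIntegral_mono measurable_const hpt
      _ = ENNReal.ofReal (Real.exp (α * (K0 + K1 * ((n:ℝ)+1)))) * volume (Sn n) :=
          setLIntegral_const _ _
      _ ≤ ENNReal.ofReal (Real.exp (α * (K0 + K1 * ((n:ℝ)+1))))
          * ENNReal.ofReal ((2:ℝ)⁻¹ ^ n) := mul_le_mul_right hvolSn _
      _ = ENNReal.ofReal (Real.exp (α * (K0 + K1 * ((n:ℝ)+1))) * (2:ℝ)⁻¹ ^ n) := by
          rw [← ENNReal.ofReal_mul (Real.exp_nonneg _)]
      _ = ENNReal.ofReal (M * r ^ n) := by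
          congr 1
          rw [hM, hr, mul_pow, ← Real.exp_nat_mul, ← mul_assoc, ← Real.exp_add]
          congr 2
          push_cast
          ring
  have hpartb : ∫⁻ x in Sᶜ, ENNReal.ofReal (Phi p (α * |g x| ^ q)) ≤ ENNReal.ofReal C2 := by
    calc ∫⁻ x in Sᶜ, ENNReal.ofReal (Phi p (α * |g x| ^ q))
        ≤ ∫⁻ x in Z ∪ ⋃ n, Sn n, ENNReal.ofReal (Phi p (α * |g x| ^ q)) :=
          lintegral_mono_set hcover
      _ ≤ (∫⁻ x in Z, ENNReal.ofReal (Phi p (α * |g x| ^ q)))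
          + ∫⁻ x in ⋃ n, Sn n, ENNReal.ofReal (Phi p (α * |g x| ^ q)) :=
          lintegral_union_le _ _ _
      _ ≤ 0 + ∑' n, ∫⁻ x in Sn n, ENNReal.ofReal (Phi p (α * |g x| ^ q)) := by
          apply add_le_add
          · rw [setLIntegral_measure_zero _ _ hZ0]
          · exact lintegral_iUnion_le _ _
      _ ≤ ∑' n, ENNReal.ofReal (M * r ^ n) := by
          rw [zero_add]
          exact ENNReal.tsum_le_tsum hSnbound
      _ = ENNReal.ofReal C2 := by
          have hsummable : Summable (fun n : ℕ => M * r ^ n) :=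
            (summable_geometric_of_lt_one hr0 hr1).mul_left M
          rw [← ENNReal.ofReal_tsum_of_nonneg (fun n => by positivity) hsummable]
          congr 1
          rw [tsum_mul_left, tsum_geometric_of_lt_one hr0 hr1, hC2]
  -- combine
  calc ∫⁻ x : ℝ, ENNReal.ofReal (Phi p (α * |g x| ^ (1 / (1 - s))))
      = (∫⁻ x in S, ENNReal.ofReal (Phi p (α * |g x| ^ q)))
        + ∫⁻ x in Sᶜ, ENNReal.ofReal (Phi p (α * |g x| ^ q)) :=
        (lintegral_add_compl _ hSmeas).symm
    _ ≤ ENNReal.ofReal C1 + ENNReal.ofReal C2 := add_le_add hparta hpartb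
    _ = ENNReal.ofReal (C1 + C2) := (ENNReal.ofReal_add hC1nn hC2nn).symm


theorem stmt15 (s p : ℝ) (hs : s ∈ Set.Ioo (0:ℝ) 1) (hp : 1 < p) (hsp : s * p = 1) :
    ∃ αs > 0, ∀ α : ℝ, 0 ≤ α → α < αs →
      ∃ C : ℝ, ∀ u : ℝ → ℝ, InW p u → sobNorm p u ≤ 1 →
        ∫⁻ x : ℝ, ENNReal.ofReal (Phi p (α * |u x| ^ (1 / (1 - s)))) ≤ ENNReal.ofReal C := by
  have hs1 : s < 1 := hs.2
  have h1s : 0 < 1 - s := by linarith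
  have hp0 : (0:ℝ) < p := by linarith
  set q : ℝ := 1 / (1 - s) with hqdef
  have hKpos : (0:ℝ) < (2:ℝ) ^ q * (2:ℝ) ^ q := by positivity
  refine ⟨Real.log 2 / ((2:ℝ) ^ q * (2:ℝ) ^ q),
    div_pos (Real.log_pos one_lt_two) hKpos, ?_⟩
  intro α hα0 hαlt
  have hαK : α * ((2:ℝ) ^ (1/(1-s)) * (2:ℝ) ^ (1/(1-s))) < Real.log 2 := by
    rw [← hqdef]
    exact (lt_div_iff₀ hKpos).mp hαlt
  obtain ⟨C, hC⟩ := core_bound hs hp hsp hα0 hαK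
  refine ⟨C, ?_⟩
  intro u hu hnorm
  have hmeas := hu.1.aestronglyMeasurable
  set g : ℝ → ℝ := hmeas.mk u with hgdef
  have hgmeas : Measurable g := hmeas.stronglyMeasurable_mk.measurable
  have hae : u =ᵐ[volume] g := hmeas.ae_eq_mk
  -- extract the two norm bounds
  have hsum : (∫⁻ x : ℝ, ENNReal.ofReal (|u x| ^ p)) + gagP p u ≤ 1 := by
    have h := hnorm
    unfold sobNorm at h
    have h2 := ENNReal.rpow_le_rpow h hp0.le
    rw [ENNReal.one_rpow, ← ENNReal.rpow_mul,
      show (1/p) * p = 1 by field_simp, ENNReal.rpow_one] at h2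
    exact h2
  have hLu : ∫⁻ x : ℝ, ENNReal.ofReal (|u x| ^ p) ≤ 1 :=
    le_trans (self_le_add_right _ _) hsum
  have hGu : gagP p u ≤ 1 := le_trans (self_le_add_left _ _) hsum
  have hLg : ∫⁻ x : ℝ, ENNReal.ofReal (|g x| ^ p) ≤ 1 := by
    have heq : ∫⁻ x : ℝ, ENNReal.ofReal (|g x| ^ p)
        = ∫⁻ x : ℝ, ENNReal.ofReal (|u x| ^ p) := by
      apply lintegral_congr_ae
      filter_upwards [hae] with x hx
      rw [hx]
    rw [heq]; exact hLu
  have hGg : gagP p g ≤ 1 := by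
    have heq : gagP p g = gagP p u := by
      unfold gagP
      apply lintegral_congr_ae
      filter_upwards [hae] with x hx
      apply lintegral_congr_ae
      filter_upwards [hae] with y hy
      rw [hx, hy]
    rw [heq]; exact hGu
  have hfinal := hC g hgmeas hLg hGg
  have heq2 : ∫⁻ x : ℝ, ENNReal.ofReal (Phi p (α * |u x| ^ (1 / (1 - s))))
      = ∫⁻ x : ℝ, ENNReal.ofReal (Phi p (α * |g x| ^ (1 / (1 - s)))) := by
    apply lintegral_congr_ae
    filter_upwards [hae] with x hx
    rw [hx]
  rw [heq2]
  exact hfinal
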